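/- arXiv:2412.04713 — 8 statements merged into one kernel-verified Lean document; each statement's English description precedes it below -/
import Mathlib

section
/- For any natural number n ≥ 2 and any real numbers α_0, …, α_{n-1} with −1 ≤ α_i ≤ 1 for all i, if n is even then |Σ_{i=0}^{n-2} α_i α_{i+1} − α_{n-1} α_0| ≤ n − 2. -/
lemma aux_stmt_0 (k : ℕ) (hk : 1 ≤ k) : ∀ α : ℕ → ℝ,
    (∀ i < 2 * k, -1 ≤ α i ∧ α i ≤ 1) →
    |(∑ i ∈ Finset.range (2 * k - 1), α i * α (i + 1)) - α (2 * k - 1) * α 0|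
      ≤ 2 * (k : ℝ) - 2 := by
  induction k, hk using Nat.le_induction with
  | base =>
    intro α hα
    norm_num [Finset.sum_range_one]
    rw [mul_comm]
    simp
  | succ k hk ih =>
    intro α hα
    have h1 : 2 * (k + 1) - 1 = (2 * k - 1) + 1 + 1 := by omega
    rw [h1, Finset.sum_range_succ, Finset.sum_range_succ]
    have e2k : 2 * k - 1 + 1 = 2 * k := by omega
    rw [e2k]
    set a := α (2 * k - 1) with ha
    set b := α (2 * k) with hb
    set c := α (2 * k + 1) with hc
    set d := α 0 with hd
    set S := ∑ i ∈ Finset.range (2 * k - 1), α i * α (i + 1) with hS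
    have hIH : |S - a * d| ≤ 2 * (k : ℝ) - 2 := by
      apply ih
      intro i hi
      exact hα i (by omega)
    have hab : -1 ≤ a ∧ a ≤ 1 := hα _ (by omega)
    have hbb : -1 ≤ b ∧ b ≤ 1 := hα _ (by omega)
    have hcb : -1 ≤ c ∧ c ≤ 1 := hα _ (by omega)
    have hdb : -1 ≤ d ∧ d ≤ 1 := hα _ (by omega)
    have key : S + a * b + b * c - c * d = (S - a * d) + ((a + c) * b + (a - c) * d) := by
      ring
    have hC : |(a + c) * b + (a - c) * d| ≤ 2 := by
      calc |(a + c) * b + (a - c) * d| ≤ |(a + c) * b| + |(a - c) * d| := abs_add_le _ _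
        _ = |a + c| * |b| + |a - c| * |d| := by rw [abs_mul, abs_mul]
        _ ≤ |a + c| * 1 + |a - c| * 1 := by
            have h1 : |b| ≤ 1 := abs_le.mpr hbb
            have h2 : |d| ≤ 1 := abs_le.mpr hdb
            have := abs_nonneg (a + c)
            have := abs_nonneg (a - c)
            nlinarith
        _ ≤ 2 := by
            rcases abs_cases (a + c) with ⟨h1, _⟩ | ⟨h1, _⟩ <;>
            rcases abs_cases (a - c) with ⟨h2, _⟩ | ⟨h2, _⟩ <;>
            · rw [h1, h2]; obtain ⟨_, _⟩ := hab; obtain ⟨_, _⟩ := hcb; linarith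
    calc |S + a * b + b * c - c * d| = |(S - a * d) + ((a + c) * b + (a - c) * d)| := by
          rw [key]
      _ ≤ |S - a * d| + |(a + c) * b + (a - c) * d| := abs_add_le _ _
      _ ≤ (2 * (k : ℝ) - 2) + 2 := by linarith
      _ ≤ 2 * ((k : ℝ) + 1) - 2 := by linarith
      _ = 2 * ((k + 1 : ℕ) : ℝ) - 2 := by push_cast; ring

theorem stmt_0 (n : ℕ) (hn : 2 ≤ n) (hne : Even n) (α : ℕ → ℝ)
    (hα : ∀ i < n, -1 ≤ α i ∧ α i ≤ 1) :
    |(∑ i ∈ Finset.range (n - 1), α i * α (i + 1)) - α (n - 1) * α 0| ≤ (n : ℝ) - 2 := by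
  obtain ⟨k, hk⟩ := hne
  have hk2 : n = 2 * k := by omega
  subst hk2
  have hk1 : 1 ≤ k := by omega
  have := aux_stmt_0 k hk1 α hα
  calc |(∑ i ∈ Finset.range (2 * k - 1), α i * α (i + 1)) - α (2 * k - 1) * α 0|
      ≤ 2 * (k : ℝ) - 2 := this
    _ = ((2 * k : ℕ) : ℝ) - 2 := by push_cast; ring
end

section
/- For any odd natural number n ≥ 3 and any real numbers α_0, …, α_{n-1} with −1 ≤ α_i ≤ 1 for all i, it holds that Σ_{i=0}^{n-2} α_i α_{i+1} − α_{n-1} α_0 ≤ n − 2. -/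
lemma key_ineq (a b c : ℝ) (ha1 : -1 ≤ a) (ha2 : a ≤ 1) (hb1 : -1 ≤ b) (hb2 : b ≤ 1)
    (hc1 : -1 ≤ c) (hc2 : c ≤ 1) : 1 - a * c ≤ (1 - a * b) + (1 - b * c) := by
  nlinarith [mul_nonneg (mul_nonneg (by linarith : (0:ℝ) ≤ 1 - b) (by linarith : (0:ℝ) ≤ 1 + a)) (by linarith : (0:ℝ) ≤ 1 + c),
    mul_nonneg (mul_nonneg (by linarith : (0:ℝ) ≤ 1 + b) (by linarith : (0:ℝ) ≤ 1 - a)) (by linarith : (0:ℝ) ≤ 1 - c)]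

lemma chain (α : ℕ → ℝ) : ∀ m : ℕ, 1 ≤ m → (∀ i ≤ m, -1 ≤ α i ∧ α i ≤ 1) →
    1 - α 0 * α m ≤ ∑ i ∈ Finset.range m, (1 - α i * α (i + 1)) := by
  intro m
  induction m with
  | zero => intro h; omega
  | succ k ih =>
    intro _ hb
    rcases Nat.eq_or_lt_of_le (Nat.one_le_iff_ne_zero.mpr (Nat.succ_ne_zero k)) with h1 | h1
    · have hk0 : k = 0 := by omega
      subst hk0; simp
    · have hk : 1 ≤ k := by omega
      have hb' : ∀ i ≤ k, -1 ≤ α i ∧ α i ≤ 1 := fun i hi => hb i (by omega)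
      have h0 := hb 0 (by omega)
      have hkk := hb k (by omega)
      have hk1 := hb (k+1) (by omega)
      have := ih hk hb'
      rw [Finset.sum_range_succ]
      have := key_ineq (α 0) (α k) (α (k+1)) h0.1 h0.2 hkk.1 hkk.2 hk1.1 hk1.2
      linarith

theorem stmt_1 (n : ℕ) (hn : 3 ≤ n) (hno : Odd n) (α : ℕ → ℝ)
    (hα : ∀ i < n, -1 ≤ α i ∧ α i ≤ 1) :
    (∑ i ∈ Finset.range (n - 1), α i * α (i + 1)) - α (n - 1) * α 0 ≤ (n : ℝ) - 2 := by
  have hm : 1 ≤ n - 1 := by omega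
  have hb : ∀ i ≤ n - 1, -1 ≤ α i ∧ α i ≤ 1 := fun i hi => hα i (by omega)
  have hch := chain α (n - 1) hm hb
  have hsum : ∑ i ∈ Finset.range (n - 1), (1 - α i * α (i + 1))
      = (n - 1 : ℕ) - ∑ i ∈ Finset.range (n - 1), α i * α (i + 1) := by
    rw [Finset.sum_sub_distrib]
    simp
  rw [hsum] at hch
  have hcast : ((n - 1 : ℕ) : ℝ) = (n : ℝ) - 1 := by
    have : (1:ℕ) ≤ n := by omega
    push_cast [this]; ring
  rw [hcast] at hch
  nlinarith [hch]
end

section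
/- For every natural number n ≥ 5, the vectors ψ_j (j = 0, …, n−1) in ℝ³ defined by ψ_j = (1/√(1+cos(π/n))) · (cos(j(n−1)π/n), sin(j(n−1)π/n), √(cos(π/n))) are unit vectors, and consecutive vectors are orthogonal: ⟨ψ_j, ψ_{j+1}⟩ = 0 for all j (indices mod n). -/
/-!
Each `ψ j` is the point at angle `j θ`, `θ = π - π / n`, of the horizontal circle of radius `1`
at height `√c`, `c = cos (π / n)`, rescaled by `1 / √(1 + c)`. Two such points at angles `a, b`
have inner product `(cos (a - b) + c) / (1 + c)`, which is `1` for `a = b` and vanishes as soon as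
`cos (a - b) = -c`; consecutive angles differ by `θ`, and `cos θ = -cos (π / n)`.
-/

open Real

noncomputable def liftedCircle (c a : ℝ) : EuclideanSpace ℝ (Fin 3) :=
  (1 / √(1 + c)) • WithLp.toLp 2 ![cos a, sin a, √c]

section liftedCircle

variable {c : ℝ}

theorem inner_liftedCircle (hc : 0 ≤ c) (a b : ℝ) :
    inner ℝ (liftedCircle c a) (liftedCircle c b) = (cos (a - b) + c) / (1 + c) := by
  have hsqrt : √(1 + c) ^ 2 = 1 + c := sq_sqrt (by linarith)
  have hsqrt_ne : √(1 + c) ≠ 0 := by positivity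
  simp only [liftedCircle, PiLp.inner_apply, PiLp.smul_apply, Fin.sum_univ_three,
    Matrix.cons_val_zero, Matrix.cons_val_one, Matrix.cons_val_two, Matrix.tail_cons,
    Matrix.head_cons, smul_eq_mul, RCLike.inner_apply, conj_trivial, cos_sub]
  field_simp
  rw [hsqrt, sq_sqrt hc]

theorem norm_liftedCircle (hc : 0 ≤ c) (a : ℝ) : ‖liftedCircle c a‖ = 1 := by
  have h := inner_liftedCircle hc a a
  rw [real_inner_self_eq_norm_sq, sub_self, cos_zero, div_self (by linarith)] at h
  rwa [pow_eq_one_iff_of_nonneg (norm_nonneg _) two_ne_zero] at h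

theorem inner_liftedCircle_eq_zero (hc : 0 ≤ c) {a b : ℝ} (hab : cos (a - b) = -c) :
    inner ℝ (liftedCircle c a) (liftedCircle c b) = 0 := by
  rw [inner_liftedCircle hc, hab, neg_add_cancel, zero_div]

end liftedCircle

theorem cos_pi_div_pos {n : ℕ} (hn : 3 ≤ n) : 0 < cos (π / n) := by
  have hn' : (3 : ℝ) ≤ n := by exact_mod_cast hn
  apply cos_pos_of_mem_Ioo
  constructor
  · linarith [show 0 < π / n by positivity, pi_pos]
  · calc π / n ≤ π / 3 := div_le_div_of_nonneg_left pi_pos.le (by norm_num) hn'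
      _ < π / 2 := div_lt_div_of_pos_left pi_pos (by norm_num) (by norm_num)

theorem stmt_2 (n : ℕ) (hn : 5 ≤ n) (ψ : ℕ → EuclideanSpace ℝ (Fin 3))
    (hψ : ∀ j : ℕ, ψ j = (1 / Real.sqrt (1 + Real.cos (π / n))) •
      (WithLp.toLp 2 ![Real.cos (j * ((n - 1) * π / n)), Real.sin (j * ((n - 1) * π / n)),
        Real.sqrt (Real.cos (π / n))] : EuclideanSpace ℝ (Fin 3))) :
    (∀ j : ℕ, ‖ψ j‖ = 1) ∧ (∀ j : ℕ, inner ℝ (ψ j) (ψ (j + 1)) = (0 : ℝ)) := by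
  set θ : ℝ := (n - 1) * π / n
  have hψ' (j : ℕ) : ψ j = liftedCircle (cos (π / n)) (j * θ) := hψ j
  have hc : 0 ≤ cos (π / n) := (cos_pi_div_pos (by omega)).le
  have hθ : θ = π - π / n := by
    have : (n : ℝ) ≠ 0 := by positivity
    simp only [θ]
    field_simp
  refine ⟨fun j ↦ by rw [hψ']; exact norm_liftedCircle hc _, fun j ↦ ?_⟩
  rw [hψ', hψ']
  apply inner_liftedCircle_eq_zero hc
  rw [show (j : ℝ) * θ - ((j + 1 : ℕ) : ℝ) * θ = -θ by push_cast; ring, cos_neg, hθ, cos_pi_sub]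
end

section
/- For every natural number n ≥ 5 and all j (indices mod n), the operators B_j := (−1)^j (2|ψ_j⟩⟨ψ_j| − I) on ℂ³ satisfy B_j² = I, B_j is self-adjoint, and B_j commutes with B_{j+1}. -/
/-! For a unit vector `v`, `P = |v⟩⟨v|` is a self-adjoint idempotent, so `2P - 1` is a self-adjoint
involution; if `v ⊥ w` then the two projections multiply to zero in either order, hence commute,
and so do the reflections. The signs `(-1)^j` do not affect any of this. The vectors `ψ_j` are
`(cos α, sin α, √c) / √(1 + c)` with `c = cos (π / n)` and `α = j θ`, `θ = (n - 1) π / n`; two of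
them have inner product `(cos (α - β) + c) / (1 + c)`, which vanishes for consecutive indices
because `cos θ = -c`. -/

open Real Matrix

section Reflection

variable {R : Type*} [Ring R] {p q : R}

theorem IsIdempotentElem.two_nsmul_sub_one_sq (hp : IsIdempotentElem p) : (2 • p - 1) ^ 2 = 1 := by
  have expand : (2 • p - 1) * (2 • p - 1) = 4 • (p * p) - 4 • p + 1 := by noncomm_ring
  rw [sq, expand, hp.eq, sub_self, zero_add]

theorem Commute.two_nsmul_sub_one (h : Commute p q) : Commute (2 • p - 1) (2 • q - 1) :=
  ((h.smul_left 2).smul_right 2 |>.sub_right (.one_right _)).sub_left (.one_left _)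

theorem IsSelfAdjoint.two_nsmul_sub_one [StarRing R] (hp : IsSelfAdjoint p) :
    IsSelfAdjoint (2 • p - 1) := by
  rw [two_nsmul]
  exact (hp.add hp).sub (.one _)

end Reflection

namespace Matrix

variable {m R : Type*} [CommRing R] [StarRing R] {v w : m → R}

theorem isIdempotentElem_vecMulVec_star [Fintype m] (hv : star v ⬝ᵥ v = 1) :
    IsIdempotentElem (vecMulVec v (star v)) := by
  rw [IsIdempotentElem, vecMulVec_mul_vecMulVec, hv, one_smul]

theorem isSelfAdjoint_vecMulVec_star (v : m → R) : IsSelfAdjoint (vecMulVec v (star v)) := by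
  rw [IsSelfAdjoint, star_eq_conjTranspose, conjTranspose_vecMulVec, star_star]

theorem commute_vecMulVec_star_of_dotProduct_eq_zero [Fintype m] (h : star v ⬝ᵥ w = 0) :
    Commute (vecMulVec v (star v)) (vecMulVec w (star w)) := by
  have h' : star w ⬝ᵥ v = 0 := by rw [star_dotProduct, h, star_zero]
  rw [Commute, SemiconjBy, vecMulVec_mul_vecMulVec, vecMulVec_mul_vecMulVec, h, h', zero_smul,
    zero_smul, vecMulVec_zero, vecMulVec_zero]

end Matrix

noncomputable def conePoint (c α : ℝ) : Fin 3 → ℂ :=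
  (1 / √(1 + c) : ℝ) • ![(cos α : ℂ), (sin α : ℂ), (√c : ℂ)]

theorem star_conePoint_dotProduct_conePoint {c : ℝ} (hc : 0 ≤ c) (α β : ℝ) :
    star (conePoint c α) ⬝ᵥ conePoint c β = ((cos (α - β) + c) / (1 + c) : ℝ) := by
  have h1c : 0 < 1 + c := by linarith
  simp only [conePoint, dotProduct, Fin.sum_univ_three, Pi.star_apply, Pi.smul_apply,
    cons_val_zero, cons_val_one, head_cons, cons_val_two, tail_cons, Complex.real_smul, star_mul',
    Complex.star_def, Complex.conj_ofReal]
  norm_cast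
  rw [cos_sub]
  field_simp
  rw [sq_sqrt hc, sq_sqrt h1c.le]

theorem star_conePoint_dotProduct_self {c : ℝ} (hc : 0 ≤ c) (α : ℝ) :
    star (conePoint c α) ⬝ᵥ conePoint c α = 1 := by
  rw [star_conePoint_dotProduct_conePoint hc, sub_self, cos_zero,
    div_self (by linarith), Complex.ofReal_one]

theorem star_conePoint_dotProduct_eq_zero {c α β : ℝ} (hc : 0 ≤ c) (h : cos (α - β) = -c) :
    star (conePoint c α) ⬝ᵥ conePoint c β = 0 := by
  rw [star_conePoint_dotProduct_conePoint hc, h, neg_add_cancel, zero_div, Complex.ofReal_zero]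

theorem cos_pi_div_nonneg {n : ℕ} (hn : 2 ≤ n) : 0 ≤ cos (π / n) := by
  have hn' : (2 : ℝ) ≤ n := by exact_mod_cast hn
  apply cos_nonneg_of_mem_Icc
  constructor
  · have : 0 ≤ π / n := by positivity
    linarith [pi_pos]
  · exact div_le_div_of_nonneg_left pi_pos.le two_pos hn'

theorem cos_sub_one_mul_pi_div {n : ℕ} (hn : n ≠ 0) :
    cos ((n - 1) * π / n) = -cos (π / n) := by
  rw [← cos_pi_sub]
  congr 1
  field_simp

theorem stmt_3 (n : ℕ) (hn : 5 ≤ n) (ψ : ℕ → Fin 3 → ℂ)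
    (hψ : ∀ j : ℕ, ψ j = (1 / Real.sqrt (1 + Real.cos (π / n)) : ℝ) •
      (![(Real.cos (j * ((n - 1) * π / n)) : ℂ), (Real.sin (j * ((n - 1) * π / n)) : ℂ),
        (Real.sqrt (Real.cos (π / n)) : ℂ)]))
    (B : ℕ → Matrix (Fin 3) (Fin 3) ℂ)
    (hB : ∀ j : ℕ, B j = ((-1 : ℂ) ^ j) • (2 • Matrix.vecMulVec (ψ j) (star (ψ j)) - 1)) :
    ∀ j : ℕ, B j ^ 2 = 1 ∧ IsSelfAdjoint (B j) ∧ Commute (B j) (B (j + 1)) := by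
  set θ : ℝ := (n - 1) * π / n
  have hc : 0 ≤ cos (π / n) := cos_pi_div_nonneg (by omega)
  have hψ' : ∀ j : ℕ, ψ j = conePoint (cos (π / n)) (j * θ) := hψ
  have hidem (j : ℕ) : IsIdempotentElem (vecMulVec (ψ j) (star (ψ j))) :=
    isIdempotentElem_vecMulVec_star (hψ' j ▸ star_conePoint_dotProduct_self hc _)
  have horth (j : ℕ) : star (ψ j) ⬝ᵥ ψ (j + 1) = 0 := by
    rw [hψ', hψ']
    apply star_conePoint_dotProduct_eq_zero hc
    rw [Nat.cast_succ, show j * θ - (j + 1) * θ = -θ by ring, cos_neg,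
      cos_sub_one_mul_pi_div (by omega)]
  have hsign (j : ℕ) : ((-1 : ℂ) ^ j) ^ 2 = 1 := by rw [← pow_mul, pow_mul', neg_one_sq, one_pow]
  intro j
  refine ⟨?_, ?_, ?_⟩
  · rw [hB, smul_pow, hsign, one_smul, (hidem j).two_nsmul_sub_one_sq]
  · rw [hB]
    exact ((IsSelfAdjoint.one ℂ).neg.pow j).smul
      (isSelfAdjoint_vecMulVec_star _).two_nsmul_sub_one
  · rw [hB, hB]
    exact (((commute_vecMulVec_star_of_dotProduct_eq_zero (horth j)).two_nsmul_sub_one).smul_left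
      _).smul_right _
end

section
/- For every odd natural number n ≥ 5, 4n·cos(π/n)/(1+cos(π/n)) − n > n − 2. -/
open Real

theorem stmt_5 (n : ℕ) (hn : 5 ≤ n) (hodd : Odd n) :
    4 * n * Real.cos (π / n) / (1 + Real.cos (π / n)) - n > (n : ℝ) - 2 := by
  have hn5 : (5 : ℝ) ≤ n := by exact_mod_cast hn
  have hnpos : (0 : ℝ) < n := by linarith
  set c := Real.cos (π / n) with hc
  have hbound : 1 - (π / n) ^ 2 / 2 ≤ c := Real.one_sub_sq_div_two_le_cos
  have hpi : π < 3.15 := Real.pi_lt_d2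
  have hpipos : 0 < π := Real.pi_pos
  have hpisq : π ^ 2 < 10 := by nlinarith
  have hkey : (n - 1 : ℝ) < c * (n + 1) := by
    have h1 : (π / n) ^ 2 = π ^ 2 / n ^ 2 := by rw [div_pow]
    have h2 : π ^ 2 / n ^ 2 * (2 * n ^ 2) < 10 * 2 := by
      rw [div_mul_eq_mul_div]
      rw [div_lt_iff₀ (by positivity : (0:ℝ) < n ^ 2)]
      nlinarith [mul_lt_mul_of_pos_right hpisq (by positivity : (0:ℝ) < n ^ 2)]
    nlinarith [sq_nonneg (n - (1:ℝ)), mul_le_mul_of_nonneg_right hbound (by linarith : (0:ℝ) ≤ n + 1)]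
  have hcpos : 0 < c := by nlinarith
  have h1c : 0 < 1 + c := by linarith
  rw [gt_iff_lt, lt_sub_iff_add_lt, lt_div_iff₀ h1c]
  nlinarith
end

section
/- For every natural number n ≥ 5, the quantity (1 − cos(π/n))/(1 + cos(π/n))·n + 2n·cos(π/n) − n is strictly greater than n − 2. -/
open Real

theorem stmt_8 (n : ℕ) (hn : 5 ≤ n) :
    (1 - Real.cos (π / n)) / (1 + Real.cos (π / n)) * n + 2 * n * Real.cos (π / n) - n
      > (n : ℝ) - 2 := by
  have hm : (5:ℝ) ≤ (n:ℝ) := by exact_mod_cast hn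
  have hm0 : (0:ℝ) < n := by linarith
  set m : ℝ := (n:ℝ) with hmdef
  set c : ℝ := Real.cos (π / n) with hcdef
  have hx0 : 0 < π / m := div_pos Real.pi_pos hm0
  have hclb : 1 - (π / m) ^ 2 / 2 < c :=
    Real.one_sub_sq_div_two_lt_cos (ne_of_gt hx0)
  have hpi : π < 3.15 := by
    have := Real.pi_lt_d2
    linarith
  have hpisq : π ^ 2 < 10 := by nlinarith [Real.pi_pos]
  have hc2 : 1 - 5 / m ^ 2 < c := by
    have h1 : (π / m) ^ 2 / 2 < 5 / m ^ 2 := by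
      rw [div_pow]
      rw [div_div]
      rw [div_lt_div_iff₀ (by positivity) (by positivity)]
      have hm2 : (0:ℝ) < m ^ 2 := by positivity
      nlinarith
    linarith
  have hc2' : m ^ 2 - 5 < m ^ 2 * c := by
    have h := mul_lt_mul_of_pos_left hc2 (show (0:ℝ) < m ^ 2 by positivity)
    have he : m ^ 2 * (1 - 5 / m ^ 2) = m ^ 2 - 5 := by
      field_simp
    linarith [he ▸ h]
  have hc1 : c < 1 := by
    have hle : c ≤ 1 := Real.cos_le_one _
    rcases lt_or_eq_of_le hle with h | h
    · exact h
    · exfalso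
      have hx1 : -(2 * π) < π / m := by nlinarith [Real.pi_pos]
      have hx2 : π / m < 2 * π := by
        rw [div_lt_iff₀ hm0]
        nlinarith [Real.pi_pos]
      have := (Real.cos_eq_one_iff_of_lt_of_lt hx1 hx2).mp h
      exact absurd this (ne_of_gt hx0)
  have hc0 : 0 < c := by nlinarith [sq_nonneg m]
  have h1c : (0:ℝ) < 1 + c := by linarith
  have key : 0 < 2 * m * c ^ 2 + (2 - m) * c + 2 - m := by
    nlinarith [mul_pos hm0 hm0, sq_nonneg (m * c - m), mul_pos hc0 hm0,
      mul_lt_mul_of_pos_left hc1 (mul_pos hm0 hm0)]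
  have heq : (1 - c) / (1 + c) * m + 2 * m * c - m - (m - 2)
      = (2 * m * c ^ 2 + (2 - m) * c + 2 - m) / (1 + c) := by
    field_simp
    ring
  have := div_pos key h1c
  rw [← heq] at this
  linarith
end

section
/- Let c = cos(π/n) with n = 2m+1, m ≥ 2, s = sin(π/(2n)), and x₀², x₂² as defined. Then x₀²·x₂² − (3c³ − 2c⁴)² = c(c−1)²·f(c), where f(c) = 8c⁴ + 10c³ − 3c² − 6c + 3 + (−1)^m·2√(2−2c)·(c+1)(3c−1). -/
open Real

theorem stmt_12 (m n : ℕ) (hm : 2 ≤ m) (hn : n = 2 * m + 1)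
    (c s x0sq x2sq : ℝ) (hc : c = Real.cos (π / n)) (hs : s = Real.sin (π / (2 * n)))
    (hx0 : x0sq = c ^ 2 + (1 - c ^ 2) * c * ((-1 : ℝ) ^ m * (2 * s) - 1) ^ 2)
    (hx2 : x2sq = (-2 * c + 1) ^ 2 + (1 - c ^ 2) * c * ((-1 : ℝ) ^ m * (2 * s) + 1) ^ 2) :
    x0sq * x2sq - (3 * c ^ 3 - 2 * c ^ 4) ^ 2 =
      c * (c - 1) ^ 2 * (8 * c ^ 4 + 10 * c ^ 3 - 3 * c ^ 2 - 6 * c + 3 +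
        (-1 : ℝ) ^ m * 2 * Real.sqrt (2 - 2 * c) * (c + 1) * (3 * c - 1)) := by
  have hn0 : (0:ℝ) < n := by
    have : 0 < n := by omega
    exact_mod_cast this
  have hs0 : 0 ≤ s := by
    rw [hs]
    apply Real.sin_nonneg_of_nonneg_of_le_pi
    · positivity
    · rw [div_le_iff₀ (by positivity)]
      have hn1 : (1:ℝ) ≤ n := by exact_mod_cast Nat.one_le_iff_ne_zero.2 (by omega)
      nlinarith [Real.pi_pos]
  have hs2 : s ^ 2 = (1 - c) / 2 := by
    rw [hs, hc, Real.sin_sq_eq_half_sub]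
    have : 2 * (π / (2 * n)) = π / n := by field_simp
    rw [this]; ring
  have hsqrt : Real.sqrt (2 - 2 * c) = 2 * s := by
    have h : 2 - 2 * c = (2 * s) ^ 2 := by rw [mul_pow, hs2]; ring
    rw [h, Real.sqrt_sq (by linarith)]
  have hc' : c = 1 - 2 * s ^ 2 := by rw [hs2]; ring
  subst hx0 hx2
  rw [hsqrt]
  rcases Nat.even_or_odd m with h | h
  · rw [h.neg_one_pow]
    rw [hc']; ring
  · rw [h.neg_one_pow]
    rw [hc']; ring
end

section
/- For all real c with cos(π/7) ≤ c < 1, 8c⁴ + 10c³ − 3c² − 6c + 3 − 2√(2−2c)·(c+1)·(3c−1) > 0. -/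
open Real

theorem stmt_14 (c : ℝ) (h1 : Real.cos (π / 7) ≤ c) (h2 : c < 1) :
    8 * c ^ 4 + 10 * c ^ 3 - 3 * c ^ 2 - 6 * c + 3 -
      2 * Real.sqrt (2 - 2 * c) * (c + 1) * (3 * c - 1) > 0 := by
  have hc : (0.86 : ℝ) ≤ c := by
    have h6 : Real.cos (π / 6) ≤ Real.cos (π / 7) := by
      apply Real.cos_le_cos_of_nonneg_of_le_pi
      · positivity
      · linarith [Real.pi_pos]
      · nlinarith [Real.pi_pos]
    rw [Real.cos_pi_div_six] at h6
    have h3 : (1.72 : ℝ) ≤ Real.sqrt 3 := by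
      rw [show (1.72:ℝ) = Real.sqrt (1.72^2) by rw [Real.sqrt_sq]; norm_num]
      apply Real.sqrt_le_sqrt; norm_num
    linarith
  set s := Real.sqrt (2 - 2 * c) with hs
  have hs0 : 0 ≤ s := Real.sqrt_nonneg _
  have hs2 : s ^ 2 = 2 - 2 * c := Real.sq_sqrt (by linarith)
  nlinarith [sq_nonneg (s - 1/2), sq_nonneg s, sq_nonneg (c - 1), mul_nonneg hs0 hs0, sq_nonneg (s*(c-1))]
end
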